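/- arXiv:2310.10039 — 7 statements merged into one kernel-verified Lean document; each statement's English description precedes it below -/
import Mathlib

section
/- Let E be a real inner product space, let T > 0 and κ ≥ 0, and let γ : ℝ → E be a twice continuously differentiable curve such that for all t ∈ [0, T] one has ‖γ(t)‖ = 1, ‖γ'(t)‖ = 1, and ‖γ''(t)‖ ≤ κ. Then for every t ∈ [0, T], ⟨γ'(t), γ(0)⟩ ≤ -t + κ²t³/6. -/
/-!
Differentiating `‖γ‖² = 1` and `‖γ'‖² = 1` gives `⟪γ', γ⟫ = 0` and `⟪γ'', γ'⟫ = 0`, and then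
`⟪γ'', γ⟫ = -‖γ'‖² = -1`. Write `γ 0 = γ t - t • γ' t + R t`; since `R' t = t • γ'' t`, we have
`‖R t‖ ≤ κ t² / 2`, hence `⟪γ'' t, γ 0⟫ ≤ -1 + κ² t² / 2`. Integrating this from
`⟪γ' 0, γ 0⟫ = 0` gives the bound.
-/

open RealInnerProductSpace Set

theorem norm_sub_sub_smul_deriv_le {F : Type*} [NormedAddCommGroup F] [NormedSpace ℝ F]
    {f f' f'' : ℝ → F} {T κ t : ℝ}
    (hf : ∀ s ∈ Icc 0 T, HasDerivAt f (f' s) s) (hf' : ∀ s ∈ Icc 0 T, HasDerivAt f' (f'' s) s)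
    (hf'' : ∀ s ∈ Icc 0 T, ‖f'' s‖ ≤ κ) (ht : t ∈ Icc 0 T) :
    ‖f 0 - (f t - t • f' t)‖ ≤ κ * t ^ 2 / 2 := by
  have hR : ∀ s ∈ Icc 0 T, HasDerivAt (fun s => f 0 - (f s - s • f' s)) (s • f'' s) s := by
    intro s hs
    refine ((hasDerivAt_const s (f 0)).fun_sub
      ((hf s hs).fun_sub ((hasDerivAt_id s).fun_smul (hf' s hs)))).congr_deriv ?_
    simp
  have hB (s : ℝ) : HasDerivAt (fun s => κ * s ^ 2 / 2) (κ * s) s := by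
    refine (((hasDerivAt_pow 2 s).const_mul κ).div_const 2).congr_deriv ?_
    push_cast
    ring
  refine image_norm_le_of_norm_deriv_right_le_deriv_boundary
    (fun s hs => (hR s hs).continuousAt.continuousWithinAt)
    (fun s hs => (hR s (Ico_subset_Icc_self hs)).hasDerivWithinAt) (by simp) hB
    (fun s hs => ?_) ht
  rw [norm_smul, Real.norm_of_nonneg hs.1, mul_comm κ]
  exact mul_le_mul_of_nonneg_left (hf'' s (Ico_subset_Icc_self hs)) hs.1

section InnerProductSpace

variable {E : Type*} [NormedAddCommGroup E] [InnerProductSpace ℝ E]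

theorem inner_deriv_add_inner_deriv_eq_zero {u v : ℝ → E} {u' v' : E} {a b c t : ℝ}
    (hab : a < b) (huv : ∀ s ∈ Icc a b, ⟪u s, v s⟫ = c) (ht : t ∈ Icc a b)
    (hu : HasDerivAt u u' t) (hv : HasDerivAt v v' t) : ⟪u', v t⟫ + ⟪u t, v'⟫ = 0 := by
  rw [add_comm]
  exact (uniqueDiffOn_Icc hab t ht).eq_deriv _ (hu.inner ℝ hv).hasDerivWithinAt
    ((hasDerivWithinAt_const t _ c).congr huv (huv t ht))

theorem inner_deriv_self_eq_zero {u : ℝ → E} {u' : E} {a b r t : ℝ}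
    (hab : a < b) (hu : ∀ s ∈ Icc a b, ‖u s‖ = r) (ht : t ∈ Icc a b) (hd : HasDerivAt u u' t) :
    ⟪u', u t⟫ = 0 := by
  have := inner_deriv_add_inner_deriv_eq_zero hab (c := r ^ 2)
    (fun s hs => by rw [real_inner_self_eq_norm_sq, hu s hs]) ht hd hd
  rw [real_inner_comm u'] at this
  linarith

theorem inner_second_deriv_le_of_unit_speed_sphere {γ γ' γ'' : ℝ → E} {T κ t : ℝ} (hT : 0 < T)
    (hγ : ∀ s ∈ Icc 0 T, HasDerivAt γ (γ' s) s) (hγ' : ∀ s ∈ Icc 0 T, HasDerivAt γ' (γ'' s) s)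
    (hsphere : ∀ s ∈ Icc 0 T, ‖γ s‖ = 1) (hspeed : ∀ s ∈ Icc 0 T, ‖γ' s‖ = 1)
    (hcurv : ∀ s ∈ Icc 0 T, ‖γ'' s‖ ≤ κ) (ht : t ∈ Icc 0 T) :
    ⟪γ'' t, γ 0⟫ ≤ -1 + κ ^ 2 * t ^ 2 / 2 := by
  have hnormal : ⟪γ'' t, γ t⟫ = -1 := by
    have horth (s : ℝ) (hs : s ∈ Icc 0 T) : ⟪γ' s, γ s⟫ = 0 :=
      inner_deriv_self_eq_zero hT hsphere hs (hγ s hs)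
    have := inner_deriv_add_inner_deriv_eq_zero hT horth ht (hγ' t ht) (hγ t ht)
    rw [real_inner_self_eq_norm_sq, hspeed t ht] at this
    linarith
  have htangent : ⟪γ'' t, γ' t⟫ = 0 := inner_deriv_self_eq_zero hT hspeed ht (hγ' t ht)
  have hremainder : ⟪γ'' t, γ 0 - (γ t - t • γ' t)⟫ ≤ κ * (κ * t ^ 2 / 2) :=
    (real_inner_le_norm _ _).trans <| mul_le_mul (hcurv t ht)
      (norm_sub_sub_smul_deriv_le hγ hγ' hcurv ht) (norm_nonneg _)
      ((norm_nonneg _).trans (hcurv t ht))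
  rw [inner_sub_right, inner_sub_right, real_inner_smul_right, hnormal, htangent] at hremainder
  linarith

end InnerProductSpace

theorem stmt_0_general {E : Type*} [NormedAddCommGroup E] [InnerProductSpace ℝ E]
    (T κ : ℝ) (hT : 0 < T) (γ : ℝ → E)
    (hγ : ContDiff ℝ 2 γ)
    (hsphere : ∀ t ∈ Set.Icc (0 : ℝ) T, ‖γ t‖ = 1)
    (hspeed : ∀ t ∈ Set.Icc (0 : ℝ) T, ‖deriv γ t‖ = 1)
    (hcurv : ∀ t ∈ Set.Icc (0 : ℝ) T, ‖deriv (deriv γ) t‖ ≤ κ) :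
    ∀ t ∈ Set.Icc (0 : ℝ) T, ⟪deriv γ t, γ 0⟫ ≤ -t + κ ^ 2 * t ^ 3 / 6 := by
  have hγ₁ (s : ℝ) (_ : s ∈ Icc 0 T) : HasDerivAt γ (deriv γ s) s :=
    (hγ.differentiable two_ne_zero s).hasDerivAt
  have hγ₂ (s : ℝ) (_ : s ∈ Icc 0 T) : HasDerivAt (deriv γ) (deriv (deriv γ) s) s :=
    (hγ.differentiable_deriv_two s).hasDerivAt
  have hφ (s : ℝ) (hs : s ∈ Icc 0 T) :
      HasDerivAt (fun s => ⟪deriv γ s, γ 0⟫) ⟪deriv (deriv γ) s, γ 0⟫ s := by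
    simpa using (hγ₂ s hs).inner ℝ (hasDerivAt_const s (γ 0))
  have hB (s : ℝ) : HasDerivAt (fun s => -s + κ ^ 2 * s ^ 3 / 6) (-1 + κ ^ 2 * s ^ 2 / 2) s := by
    refine ((hasDerivAt_neg s).fun_add
      (((hasDerivAt_pow 3 s).const_mul (κ ^ 2)).div_const 6)).congr_deriv ?_
    push_cast
    ring
  have hstart : ⟪deriv γ 0, γ 0⟫ = 0 :=
    inner_deriv_self_eq_zero hT hsphere (left_mem_Icc.2 hT.le) (hγ₁ 0 (left_mem_Icc.2 hT.le))
  exact image_le_of_deriv_right_le_deriv_boundary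
    (fun s hs => (hφ s hs).continuousAt.continuousWithinAt)
    (fun s hs => (hφ s (Ico_subset_Icc_self hs)).hasDerivWithinAt) (by simp [hstart])
    (fun s _ => (hB s).continuousAt.continuousWithinAt) (fun s _ => (hB s).hasDerivWithinAt)
    (fun s hs => inner_second_deriv_le_of_unit_speed_sphere hT hγ₁ hγ₂ hsphere hspeed hcurv
      (Ico_subset_Icc_self hs))

theorem stmt_0 {E : Type*} [NormedAddCommGroup E] [InnerProductSpace ℝ E]
    (T κ : ℝ) (hT : 0 < T) (hκ : 0 ≤ κ) (γ : ℝ → E)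
    (hγ : ContDiff ℝ 2 γ)
    (hsphere : ∀ t ∈ Set.Icc (0 : ℝ) T, ‖γ t‖ = 1)
    (hspeed : ∀ t ∈ Set.Icc (0 : ℝ) T, ‖deriv γ t‖ = 1)
    (hcurv : ∀ t ∈ Set.Icc (0 : ℝ) T, ‖deriv (deriv γ) t‖ ≤ κ) :
    ∀ t ∈ Set.Icc (0 : ℝ) T, ⟪deriv γ t, γ 0⟫ ≤ -t + κ ^ 2 * t ^ 3 / 6 :=
  stmt_0_general T κ hT γ hγ hsphere hspeed hcurv
end

section
/- Let E be a real inner product space, let T > 0 and κ ≥ 0, and let γ : ℝ → E be a twice continuously differentiable curve such that for all t ∈ [0, T] one has ‖γ(t)‖ = 1, ‖γ'(t)‖ = 1, and ‖γ''(t)‖ ≤ κ. Then for every t ∈ [0, T], ⟨γ(0), γ'(t)⟩ ≤ -t + κt²/2. -/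
/-!
Fix `t` and put `v = γ'(t)`. Differentiating `‖γ‖² = 1` gives `⟪γ t, v⟫ = 0`, and the curvature
bound makes `γ'` `κ`-Lipschitz, so `⟪γ' s, v⟫ ≥ 1 - κ (t - s)` for `s ≤ t`. Integrating this lower
bound for the derivative of `s ↦ ⟪γ s, v⟫` over `[0, t]` gives `-⟪γ 0, v⟫ ≥ t - κ t² / 2`.
-/

open RealInnerProductSpace Set

theorem inner_self_deriv_eq_zero_of_norm_eqOn {E : Type*} [NormedAddCommGroup E]
    [InnerProductSpace ℝ E] {γ : ℝ → E} {s : Set ℝ} {r t : ℝ} (hs : UniqueDiffOn ℝ s)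
    (hnorm : ∀ u ∈ s, ‖γ u‖ = r) (ht : t ∈ s) (hγ : DifferentiableAt ℝ γ t) :
    ⟪γ t, deriv γ t⟫ = 0 := by
  have hsq : HasDerivWithinAt (‖γ ·‖ ^ 2) (2 * ⟪γ t, deriv γ t⟫) s t :=
    hγ.hasDerivAt.norm_sq.hasDerivWithinAt
  have hconst : HasDerivWithinAt (‖γ ·‖ ^ 2) 0 s t :=
    (hasDerivWithinAt_const t s (r ^ 2)).congr (fun u hu => by simp only [hnorm u hu])
      (by simp only [hnorm t ht])
  linarith [(hs t ht).eq_deriv s hsq hconst]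

theorem one_sub_le_inner_of_norm_sub_le {E : Type*} [NormedAddCommGroup E]
    [InnerProductSpace ℝ E] {v w : E} {c : ℝ} (hv : ‖v‖ = 1) (hvw : ‖v - w‖ ≤ c) :
    1 - c ≤ ⟪w, v⟫ := by
  have hsplit : ⟪w, v⟫ = ‖v‖ ^ 2 - ⟪v - w, v⟫ := by
    rw [inner_sub_left, real_inner_self_eq_norm_sq]; ring
  have hcs : ⟪v - w, v⟫ ≤ ‖v - w‖ * ‖v‖ := real_inner_le_norm _ _
  rw [hv] at hsplit hcs
  linarith

theorem sub_le_sub_of_hasDerivAt_le {f g f' g' : ℝ → ℝ} {a b : ℝ} (hab : a ≤ b)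
    (hf : ∀ x ∈ Icc a b, HasDerivAt f (f' x) x) (hg : ∀ x ∈ Icc a b, HasDerivAt g (g' x) x)
    (hle : ∀ x ∈ Icc a b, f' x ≤ g' x) : f b - f a ≤ g b - g a := by
  have hmono : MonotoneOn (fun x => g x - f x) (Icc a b) := by
    refine monotoneOn_of_hasDerivWithinAt_nonneg (f' := fun x => g' x - f' x) (convex_Icc a b)
      (fun x hx => ((hg x hx).continuousAt.sub (hf x hx).continuousAt).continuousWithinAt)
      (fun x hx => ?_) (fun x hx => ?_) <;> rw [interior_Icc] at hx
    · exact ((hg x (Ioo_subset_Icc_self hx)).sub (hf x (Ioo_subset_Icc_self hx))).hasDerivWithinAt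
    · exact sub_nonneg.mpr (hle x (Ioo_subset_Icc_self hx))
  linarith [hmono (left_mem_Icc.mpr hab) (right_mem_Icc.mpr hab) hab]

theorem stmt_1_general {E : Type*} [NormedAddCommGroup E] [InnerProductSpace ℝ E]
    (T κ : ℝ) (hT : 0 < T) (γ : ℝ → E)
    (hγ : ContDiff ℝ 2 γ)
    (hsphere : ∀ t ∈ Set.Icc (0 : ℝ) T, ‖γ t‖ = 1)
    (hspeed : ∀ t ∈ Set.Icc (0 : ℝ) T, ‖deriv γ t‖ = 1)
    (hcurv : ∀ t ∈ Set.Icc (0 : ℝ) T, ‖deriv (deriv γ) t‖ ≤ κ) :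
    ∀ t ∈ Set.Icc (0 : ℝ) T, ⟪γ 0, deriv γ t⟫ ≤ -t + κ * t ^ 2 / 2 := by
  rintro t ⟨ht0, htT⟩
  have hdiff : Differentiable ℝ γ := hγ.differentiable (by norm_num)
  have hdiff' : Differentiable ℝ (deriv γ) := hγ.differentiable_deriv_two
  set v := deriv γ t
  have horth : ⟪γ t, v⟫ = 0 :=
    inner_self_deriv_eq_zero_of_norm_eqOn (uniqueDiffOn_Icc hT) hsphere ⟨ht0, htT⟩ (hdiff t)
  have hlower : ∀ s ∈ Icc 0 t, 1 - κ * t + κ * s ≤ ⟪deriv γ s, v⟫ := by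
    rintro s ⟨hs0, hst⟩
    have hlip : ‖v - deriv γ s‖ ≤ κ * (t - s) := by
      calc ‖v - deriv γ s‖ ≤ κ * ‖t - s‖ :=
            (convex_Icc 0 T).norm_image_sub_le_of_norm_deriv_le (fun u _ => hdiff' u) hcurv
              ⟨hs0, hst.trans htT⟩ ⟨ht0, htT⟩
        _ = κ * (t - s) := by rw [Real.norm_of_nonneg (sub_nonneg.mpr hst)]
    linarith [one_sub_le_inner_of_norm_sub_le (hspeed t ⟨ht0, htT⟩) hlip]
  have hpoly (s : ℝ) : HasDerivAt (fun s => (1 - κ * t) * s + κ / 2 * s ^ 2)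
      (1 - κ * t + κ * s) s := by
    refine (((hasDerivAt_id s).const_mul (1 - κ * t)).add
      ((hasDerivAt_pow 2 s).const_mul (κ / 2))).congr_deriv ?_
    norm_num
    ring
  have hcurve (s : ℝ) : HasDerivAt (fun s => ⟪γ s, v⟫) ⟪deriv γ s, v⟫ s := by
    simpa using (hdiff s).hasDerivAt.inner ℝ (hasDerivAt_const s v)
  have hcomp := sub_le_sub_of_hasDerivAt_le ht0 (fun s _ => hpoly s) (fun s _ => hcurve s) hlower
  simp only [horth] at hcomp
  linarith

theorem stmt_1 {E : Type*} [NormedAddCommGroup E] [InnerProductSpace ℝ E]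
    (T κ : ℝ) (hT : 0 < T) (hκ : 0 ≤ κ) (γ : ℝ → E)
    (hγ : ContDiff ℝ 2 γ)
    (hsphere : ∀ t ∈ Set.Icc (0 : ℝ) T, ‖γ t‖ = 1)
    (hspeed : ∀ t ∈ Set.Icc (0 : ℝ) T, ‖deriv γ t‖ = 1)
    (hcurv : ∀ t ∈ Set.Icc (0 : ℝ) T, ‖deriv (deriv γ) t‖ ≤ κ) :
    ∀ t ∈ Set.Icc (0 : ℝ) T, ⟪γ 0, deriv γ t⟫ ≤ -t + κ * t ^ 2 / 2 :=
  stmt_1_general T κ hT γ hγ hsphere hspeed hcurv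
end

section
/- Let E be a real inner product space, let T > 0 and κ ≥ 0, and let γ : ℝ → E be a twice continuously differentiable curve such that for all t ∈ [0, T] one has ‖γ(t)‖ = 1, ‖γ'(t)‖ = 1, and ‖γ''(t)‖ ≤ κ. Then for every t ∈ [0, T], -⟨γ''(t), γ(0)⟩ ≤ 1 + κ²t²/2. -/
/-!
On the sphere, differentiating `‖γ‖² = 1` twice gives `⟪γ'', γ⟫ = -‖γ'‖² = -1`, and
differentiating `‖γ'‖² = 1` gives `⟪γ'', γ'⟫ = 0`. Hence, with `v = γ''(t)`,
`-⟪v, γ 0⟫ = 1 + ⟪v, γ t - γ 0 - t • γ' t⟫`, and the second-order Taylor remainder of `γ` at `t`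
has norm at most `κ t² / 2`, so the last term is at most `‖v‖ κ t² / 2 ≤ κ² t² / 2`.
-/

open RealInnerProductSpace Set Topology

section Taylor

variable {E : Type*} [NormedAddCommGroup E] [NormedSpace ℝ E]

theorem norm_sub_sub_smul_deriv_le_of_norm_deriv_deriv_le {f f' f'' : ℝ → E} {a b C : ℝ}
    (hab : a ≤ b) (hf : ∀ x ∈ Icc a b, HasDerivWithinAt f (f' x) (Icc a b) x)
    (hf' : ∀ x ∈ Icc a b, HasDerivWithinAt f' (f'' x) (Icc a b) x)
    (bound : ∀ x ∈ Icc a b, ‖f'' x‖ ≤ C) :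
    ‖f b - f a - (b - a) • f' b‖ ≤ C * (b - a) ^ 2 / 2 := by
  have hf'_sub : ∀ x ∈ Icc a b, ‖f' x - f' b‖ ≤ C * (b - x) := by
    intro x hx
    rw [norm_sub_rev]
    exact norm_image_sub_le_of_norm_deriv_le_segment'
      (fun y hy => (hf' y ⟨hx.1.trans hy.1, hy.2⟩).mono (Icc_subset_Icc_left hx.1))
      (fun y hy => bound y ⟨hx.1.trans hy.1, hy.2.le⟩) b ⟨hx.2, le_rfl⟩
  have hφ : ∀ x ∈ Icc a b, HasDerivWithinAt (fun y => f y - f a - (y - a) • f' b)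
      (f' x - f' b) (Icc a b) x := fun x hx => by
    simpa using ((hf x hx).sub_const (f a)).fun_sub
      (((hasDerivAt_id x).sub_const a).smul_const (f' b)).hasDerivWithinAt
  have hB : ∀ x, HasDerivAt (fun y => C * ((b - a) ^ 2 - (b - y) ^ 2) / 2) (C * (b - x)) x :=
    fun x => (((((hasDerivAt_id x).const_sub b).fun_pow 2).const_sub ((b - a) ^ 2)).const_mul
      C).div_const 2 |>.congr_deriv (by simp; ring)
  simpa using image_norm_le_of_norm_deriv_right_le_deriv_boundary
    (fun x hx => (hφ x hx).continuousWithinAt)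
    (fun x hx => (hφ x (Ico_subset_Icc_self hx)).mono_of_mem_nhdsWithin (Icc_mem_nhdsGE_of_mem hx))
    (by simp) hB (fun x hx => hf'_sub x (Ico_subset_Icc_self hx)) ⟨hab, le_rfl⟩

end Taylor

section SphericalCurve

variable {E : Type*} [NormedAddCommGroup E] [InnerProductSpace ℝ E]

theorem inner_add_inner_deriv_eq_zero_of_eventually_inner_eq {f g : ℝ → E} {s c : ℝ}
    (hf : DifferentiableAt ℝ f s) (hg : DifferentiableAt ℝ g s)
    (h : (fun u => ⟪f u, g u⟫) =ᶠ[𝓝 s] fun _ => c) :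
    ⟪f s, deriv g s⟫ + ⟪deriv f s, g s⟫ = 0 :=
  (hf.hasDerivAt.inner ℝ hg.hasDerivAt).unique ((hasDerivAt_const s c).congr_of_eventuallyEq h)

variable {γ : ℝ → E} {U : Set ℝ}

theorem inner_deriv_self_eq_zero_of_norm_eq_one (hγ : Differentiable ℝ γ) (hU : IsOpen U)
    (hnorm : ∀ t ∈ U, ‖γ t‖ = 1) {s : ℝ} (hs : s ∈ U) : ⟪deriv γ s, γ s⟫ = 0 := by
  have h := inner_add_inner_deriv_eq_zero_of_eventually_inner_eq (hγ s) (hγ s) (c := 1) <| by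
    filter_upwards [hU.mem_nhds hs] with u hu
    rw [real_inner_self_eq_norm_sq, hnorm u hu, one_pow]
  rw [real_inner_comm] at h
  linarith

theorem inner_deriv_deriv_self_eq_neg_norm_sq (hγ : Differentiable ℝ γ)
    (hγ' : Differentiable ℝ (deriv γ)) (hU : IsOpen U) (hnorm : ∀ t ∈ U, ‖γ t‖ = 1) {s : ℝ}
    (hs : s ∈ U) : ⟪deriv (deriv γ) s, γ s⟫ = -‖deriv γ s‖ ^ 2 := by
  have h := inner_add_inner_deriv_eq_zero_of_eventually_inner_eq (hγ' s) (hγ s) (c := 0) <| by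
    filter_upwards [hU.mem_nhds hs] with u hu
    exact inner_deriv_self_eq_zero_of_norm_eq_one hγ hU hnorm hu
  rw [real_inner_self_eq_norm_sq] at h
  linarith

end SphericalCurve

theorem Set.EqOn.Icc_of_Ioo {f g : ℝ → ℝ} {a b : ℝ} (h : EqOn f g (Ioo a b)) (hab : a ≠ b)
    (hf : Continuous f) (hg : Continuous g) : EqOn f g (Icc a b) := by
  simpa only [closure_Ioo hab] using h.closure hf hg

theorem stmt_2_general {E : Type*} [NormedAddCommGroup E] [InnerProductSpace ℝ E]
    (T κ : ℝ) (hT : 0 < T) (γ : ℝ → E)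
    (hγ : ContDiff ℝ 2 γ)
    (hsphere : ∀ t ∈ Set.Icc (0 : ℝ) T, ‖γ t‖ = 1)
    (hspeed : ∀ t ∈ Set.Icc (0 : ℝ) T, ‖deriv γ t‖ = 1)
    (hcurv : ∀ t ∈ Set.Icc (0 : ℝ) T, ‖deriv (deriv γ) t‖ ≤ κ) :
    ∀ t ∈ Set.Icc (0 : ℝ) T, -⟪deriv (deriv γ) t, γ 0⟫ ≤ 1 + κ ^ 2 * t ^ 2 / 2 := by
  have hγ' : ContDiff ℝ 1 (deriv γ) := hγ.deriv'
  have hd : Differentiable ℝ γ := hγ.differentiable two_ne_zero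
  have hd' : Differentiable ℝ (deriv γ) := hγ'.differentiable one_ne_zero
  have hc'' : Continuous (deriv (deriv γ)) := hγ'.continuous_deriv le_rfl
  have hnormal : EqOn (fun s => ⟪deriv (deriv γ) s, γ s⟫) (fun _ => -1) (Icc 0 T) := by
    refine EqOn.Icc_of_Ioo (fun s hs => ?_) hT.ne (hc''.inner hd.continuous) continuous_const
    rw [inner_deriv_deriv_self_eq_neg_norm_sq hd hd' isOpen_Ioo
      (fun u hu => hsphere u (Ioo_subset_Icc_self hu)) hs, hspeed s (Ioo_subset_Icc_self hs)]
    norm_num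
  have htangent : EqOn (fun s => ⟪deriv (deriv γ) s, deriv γ s⟫) (fun _ => 0) (Icc 0 T) :=
    EqOn.Icc_of_Ioo (fun s hs => inner_deriv_self_eq_zero_of_norm_eq_one hd' isOpen_Ioo
      (fun u hu => hspeed u (Ioo_subset_Icc_self hu)) hs) hT.ne (hc''.inner hd'.continuous)
      continuous_const
  intro t ht
  set v := deriv (deriv γ) t
  have hsub : Icc 0 t ⊆ Icc 0 T := Icc_subset_Icc_right ht.2
  have htaylor : ‖γ t - γ 0 - t • deriv γ t‖ ≤ κ * t ^ 2 / 2 := by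
    simpa using norm_sub_sub_smul_deriv_le_of_norm_deriv_deriv_le ht.1
      (fun x _ => (hd x).hasDerivAt.hasDerivWithinAt)
      (fun x _ => (hd' x).hasDerivAt.hasDerivWithinAt) (fun x hx => hcurv x (hsub hx))
  have hκ : 0 ≤ κ := (norm_nonneg v).trans (hcurv t ht)
  calc -⟪v, γ 0⟫
      = -⟪v, γ t⟫ + ⟪v, γ t - γ 0 - t • deriv γ t⟫ + t * ⟪v, deriv γ t⟫ := by
        rw [inner_sub_right, inner_sub_right, real_inner_smul_right]; ring
    _ = 1 + ⟪v, γ t - γ 0 - t • deriv γ t⟫ := by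
        rw [show ⟪v, γ t⟫ = -1 from hnormal ht, show ⟪v, deriv γ t⟫ = 0 from htangent ht]; ring
    _ ≤ 1 + ‖v‖ * ‖γ t - γ 0 - t • deriv γ t‖ := by gcongr; exact real_inner_le_norm _ _
    _ ≤ 1 + κ * (κ * t ^ 2 / 2) := by gcongr; exact hcurv t ht
    _ = 1 + κ ^ 2 * t ^ 2 / 2 := by ring

theorem stmt_2 {E : Type*} [NormedAddCommGroup E] [InnerProductSpace ℝ E]
    (T κ : ℝ) (hT : 0 < T) (hκ : 0 ≤ κ) (γ : ℝ → E)
    (hγ : ContDiff ℝ 2 γ)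
    (hsphere : ∀ t ∈ Set.Icc (0 : ℝ) T, ‖γ t‖ = 1)
    (hspeed : ∀ t ∈ Set.Icc (0 : ℝ) T, ‖deriv γ t‖ = 1)
    (hcurv : ∀ t ∈ Set.Icc (0 : ℝ) T, ‖deriv (deriv γ) t‖ ≤ κ) :
    ∀ t ∈ Set.Icc (0 : ℝ) T, -⟪deriv (deriv γ) t, γ 0⟫ ≤ 1 + κ ^ 2 * t ^ 2 / 2 :=
  stmt_2_general T κ hT γ hγ hsphere hspeed hcurv
end

section
/- Let E be a real inner product space, let T > 0, κ ≥ 0, Δ ≥ 0, and let γ : ℝ → E be a twice continuously differentiable curve such that for all t ∈ [0, T] one has ‖γ(t)‖ = 1, ‖γ'(t)‖ = 1, and ‖γ''(t)‖ ≤ κ. Let s♮, z ∈ E satisfy ‖s♮ - γ(0)‖ ≤ Δ. Then for every t ∈ [0, T], -⟨γ''(t), s♮ + z⟩ ≤ 1 + κ²t²/2 + κΔ + κ‖z‖. -/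
/-!
Differentiating `‖γ‖² = 1` and `‖γ'‖² = 1` gives `⟪γ', γ⟫ = 0`, hence `⟪γ'', γ⟫ = -‖γ'‖² = -1`,
and `⟪γ'', γ'⟫ = 0`. Write `s + z = γ t + (γ 0 - γ t) + (s - γ 0) + z`: the first term
contributes exactly `1`, the last two at most `κ Δ` and `κ ‖z‖` by Cauchy–Schwarz. For the chord
term, `γ''(t) ⟂ γ'(t)` and `γ'` is `κ`-Lipschitz, so `⟪γ''(t), γ'(u)⟫ ≤ κ² (t - u)`, which
integrates to `κ² t² / 2`.
-/

open RealInnerProductSpace Set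

section Calculus

variable {E : Type*} [NormedAddCommGroup E] [InnerProductSpace ℝ E]

theorem HasDerivAt.eq_zero_of_eqOn_const {F : Type*} [NormedAddCommGroup F] [NormedSpace ℝ F]
    {f : ℝ → F} {f' c : F} {s : Set ℝ} {x : ℝ} (hf : HasDerivAt f f' x)
    (hs : UniqueDiffWithinAt ℝ s x) (hx : x ∈ s) (hc : ∀ y ∈ s, f y = c) : f' = 0 :=
  hs.eq_deriv s hf.hasDerivWithinAt ((hasDerivWithinAt_const x s c).congr hc (hc x hx))

theorem inner_deriv_self_eq_zero_of_norm_eqOn {f : ℝ → E} {f' : E} {s : Set ℝ} {x r : ℝ}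
    (hf : HasDerivAt f f' x) (hs : UniqueDiffWithinAt ℝ s x) (hx : x ∈ s)
    (hnorm : ∀ y ∈ s, ‖f y‖ = r) : ⟪f', f x⟫ = 0 := by
  have h := hf.norm_sq.eq_zero_of_eqOn_const hs hx (c := r ^ 2) fun y hy => by
    simp only [hnorm y hy]
  rw [real_inner_comm]
  linarith

theorem inner_deriv_deriv_eq_neg_norm_sq_of_norm_eqOn {f f' : ℝ → E} {f'' : E} {s : Set ℝ}
    {x r : ℝ} (hf : ∀ y ∈ s, HasDerivAt f (f' y) y) (hf' : HasDerivAt f' f'' x)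
    (hs : UniqueDiffOn ℝ s) (hx : x ∈ s) (hnorm : ∀ y ∈ s, ‖f y‖ = r) :
    ⟪f'', f x⟫ = -‖f' x‖ ^ 2 := by
  have h := (hf'.inner ℝ (hf x hx)).eq_zero_of_eqOn_const (hs x hx) hx (c := 0) fun y hy =>
    inner_deriv_self_eq_zero_of_norm_eqOn (hf y hy) (hs y hy) hy hnorm
  rw [real_inner_self_eq_norm_sq] at h
  linarith

theorem sub_le_of_hasDerivAt_le_mul_sub {g g' : ℝ → ℝ} {a b C : ℝ} (hab : a ≤ b)
    (hg : ∀ u ∈ Icc a b, HasDerivAt g (g' u) u) (hg' : ∀ u ∈ Icc a b, g' u ≤ C * (b - u)) :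
    g b - g a ≤ C * (b - a) ^ 2 / 2 := by
  have hdiff : ∀ u ∈ Icc a b,
      HasDerivAt (fun u => g u + C * (b - u) ^ 2 / 2) (g' u - C * (b - u)) u := fun u hu => by
    refine ((hg u hu).fun_add
      (((hasDerivAt_id' u).const_sub b).fun_pow 2 |>.const_mul C |>.div_const 2)).congr_deriv ?_
    norm_num
    ring
  have hanti : AntitoneOn (fun u => g u + C * (b - u) ^ 2 / 2) (Icc a b) :=
    antitoneOn_of_hasDerivWithinAt_nonpos (convex_Icc a b)
      (fun u hu => (hdiff u hu).continuousAt.continuousWithinAt)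
      (fun u hu => (hdiff u (interior_subset hu)).hasDerivWithinAt)
      (fun u hu => sub_nonpos.mpr (hg' u (interior_subset hu)))
  have := hanti (left_mem_Icc.mpr hab) (right_mem_Icc.mpr hab) hab
  simp only [sub_self] at this
  linarith

theorem neg_mul_le_inner_of_norm_le {v w : E} {κ Δ : ℝ} (hv : ‖v‖ ≤ κ) (hw : ‖w‖ ≤ Δ) :
    -(κ * Δ) ≤ ⟪v, w⟫ := by
  have := mul_le_mul hv hw (norm_nonneg w) ((norm_nonneg v).trans hv)
  linarith [neg_abs_le ⟪v, w⟫, abs_real_inner_le_norm v w]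

theorem inner_sub_le_of_inner_deriv_eq_zero {γ : ℝ → E} {v : E} {a b κ : ℝ} (hab : a ≤ b)
    (hγ : Differentiable ℝ γ) (hγ' : Differentiable ℝ (deriv γ))
    (hcurv : ∀ u ∈ Icc a b, ‖deriv (deriv γ) u‖ ≤ κ) (hv : ⟪v, deriv γ b⟫ = 0) :
    ⟪v, γ b - γ a⟫ ≤ ‖v‖ * κ * (b - a) ^ 2 / 2 := by
  rw [inner_sub_right]
  refine sub_le_of_hasDerivAt_le_mul_sub hab
    (fun u _ => (hasDerivAt_const u v).inner ℝ (hγ u).hasDerivAt) fun u hu => ?_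
  have hlip : ‖deriv γ u - deriv γ b‖ ≤ κ * ‖u - b‖ :=
    (convex_Icc a b).norm_image_sub_le_of_norm_deriv_le (fun x _ => hγ' x) hcurv
      (right_mem_Icc.mpr hab) hu
  rw [Real.norm_eq_abs, abs_of_nonpos (sub_nonpos.mpr hu.2), neg_sub] at hlip
  calc ⟪v, deriv γ u⟫ + ⟪(0 : E), γ u⟫ = ⟪v, deriv γ u - deriv γ b⟫ := by
        rw [inner_zero_left, inner_sub_right, hv]; ring
    _ ≤ ‖v‖ * ‖deriv γ u - deriv γ b‖ := real_inner_le_norm _ _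
    _ ≤ ‖v‖ * κ * (b - u) := by
        rw [mul_assoc]; exact mul_le_mul_of_nonneg_left hlip (norm_nonneg v)

end Calculus

theorem stmt_3_general {E : Type*} [NormedAddCommGroup E] [InnerProductSpace ℝ E]
    (T κ Δ : ℝ) (hT : 0 < T) (γ : ℝ → E)
    (hγ : ContDiff ℝ 2 γ)
    (hsphere : ∀ t ∈ Set.Icc (0 : ℝ) T, ‖γ t‖ = 1)
    (hspeed : ∀ t ∈ Set.Icc (0 : ℝ) T, ‖deriv γ t‖ = 1)
    (hcurv : ∀ t ∈ Set.Icc (0 : ℝ) T, ‖deriv (deriv γ) t‖ ≤ κ)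
    (s z : E) (hs : ‖s - γ 0‖ ≤ Δ) :
    ∀ t ∈ Set.Icc (0 : ℝ) T,
      -⟪deriv (deriv γ) t, s + z⟫ ≤ 1 + κ ^ 2 * t ^ 2 / 2 + κ * Δ + κ * ‖z‖ := by
  intro t ht
  have hγ₁ : Differentiable ℝ γ := hγ.differentiable two_ne_zero
  have hγ₂ : Differentiable ℝ (deriv γ) :=
    (hγ.iterate_deriv' 1 1).differentiable one_ne_zero
  have hunique : UniqueDiffOn ℝ (Icc 0 T) := uniqueDiffOn_Icc hT
  set a := deriv (deriv γ) t
  have ha : ‖a‖ ≤ κ := hcurv t ht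
  have hnormal : ⟪a, γ t⟫ = -1 := by
    rw [inner_deriv_deriv_eq_neg_norm_sq_of_norm_eqOn (fun u _ => (hγ₁ u).hasDerivAt)
      (hγ₂ t).hasDerivAt hunique ht hsphere, hspeed t ht]
    norm_num
  have htangent : ⟪a, deriv γ t⟫ = 0 :=
    inner_deriv_self_eq_zero_of_norm_eqOn (hγ₂ t).hasDerivAt (hunique t ht) ht hspeed
  have hchord : ⟪a, γ t - γ 0⟫ ≤ ‖a‖ * κ * (t - 0) ^ 2 / 2 :=
    inner_sub_le_of_inner_deriv_eq_zero ht.1 hγ₁ hγ₂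
      (fun u hu => hcurv u ⟨hu.1, hu.2.trans ht.2⟩) htangent
  have hchord_le : ‖a‖ * κ * (t - 0) ^ 2 / 2 ≤ κ ^ 2 * t ^ 2 / 2 := by
    have hκ : 0 ≤ κ := (norm_nonneg a).trans ha
    rw [sub_zero, sq κ]
    gcongr
  have hsignal := neg_mul_le_inner_of_norm_le ha hs
  have hnoise := neg_mul_le_inner_of_norm_le ha (le_refl ‖z‖)
  have hsplit : -⟪a, s + z⟫ = -⟪a, γ t⟫ + ⟪a, γ t - γ 0⟫ - ⟪a, s - γ 0⟫ - ⟪a, z⟫ := by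
    simp only [inner_add_right, inner_sub_right]; ring
  linarith

theorem stmt_3 {E : Type*} [NormedAddCommGroup E] [InnerProductSpace ℝ E]
    (T κ Δ : ℝ) (hT : 0 < T) (hκ : 0 ≤ κ) (hΔ : 0 ≤ Δ) (γ : ℝ → E)
    (hγ : ContDiff ℝ 2 γ)
    (hsphere : ∀ t ∈ Set.Icc (0 : ℝ) T, ‖γ t‖ = 1)
    (hspeed : ∀ t ∈ Set.Icc (0 : ℝ) T, ‖deriv γ t‖ = 1)
    (hcurv : ∀ t ∈ Set.Icc (0 : ℝ) T, ‖deriv (deriv γ) t‖ ≤ κ)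
    (s z : E) (hs : ‖s - γ 0‖ ≤ Δ) :
    ∀ t ∈ Set.Icc (0 : ℝ) T,
      -⟪deriv (deriv γ) t, s + z⟫ ≤ 1 + κ ^ 2 * t ^ 2 / 2 + κ * Δ + κ * ‖z‖ :=
  stmt_3_general T κ Δ hT γ hγ hsphere hspeed hcurv s z hs
end

section
/- Let E be a real inner product space and let κ > 0. Let γ : ℝ → E be a twice continuously differentiable curve such that for all t ∈ [0, T] one has ‖γ(t)‖ = 1, ‖γ'(t)‖ = 1, and ‖γ''(t)‖ ≤ κ, where 0 < T ≤ 2/κ. Let s♮, z ∈ E satisfy ‖s♮ - γ(0)‖ ≤ 1/κ and ‖z‖ ≤ 1/(30κ). Then for every t ∈ [0, T], -⟨γ''(t), s♮ + z⟩ ≤ 121/30. -/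
/-!
Differentiating `‖γ‖² = 1` twice along the sphere gives `⟪γ'', γ⟫ = -‖γ'‖² = -1`. Writing
`s + z = γ t + (s + z - γ t)`, the first term contributes exactly `1` to `-⟪γ'' t, s + z⟫` and the
second at most `κ ‖s + z - γ t‖`. By unit speed `‖γ t - γ 0‖ ≤ t ≤ 2/κ`, so
`‖s + z - γ t‖ ≤ 1/κ + 2/κ + 1/(30κ)`, and `1 + 91/30 = 121/30`.
-/

open RealInnerProductSpace Set

section

variable {E F : Type*} [NormedAddCommGroup E] [InnerProductSpace ℝ E]
  [NormedAddCommGroup F] [NormedSpace ℝ F]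

-- This holds at the endpoints too, since `Icc a b` has unique derivatives when `a < b`.
theorem HasDerivAt.eq_zero_of_eqOn_const_Icc {f : ℝ → F} {f' c : F} {a b t : ℝ} (hab : a < b)
    (ht : t ∈ Icc a b) (hf : HasDerivAt f f' t) (hc : EqOn f (fun _ ↦ c) (Icc a b)) : f' = 0 :=
  (uniqueDiffOn_Icc hab t ht).eq_deriv _ hf.hasDerivWithinAt
    ((hasDerivWithinAt_const t _ c).congr hc (hc ht))

theorem inner_deriv_self_eq_zero_of_norm_eqOn_Icc {γ : ℝ → E} {a b r t : ℝ} (hab : a < b)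
    (ht : t ∈ Icc a b) (hγ : DifferentiableAt ℝ γ t) (hnorm : ∀ u ∈ Icc a b, ‖γ u‖ = r) :
    ⟪deriv γ t, γ t⟫ = 0 := by
  have h := hγ.hasDerivAt.norm_sq.eq_zero_of_eqOn_const_Icc hab ht (c := r ^ 2)
    fun u hu ↦ by simp only [hnorm u hu]
  rw [real_inner_comm]
  linarith

theorem inner_deriv_deriv_self_eq_neg_norm_sq_of_norm_eqOn_Icc {γ : ℝ → E} {a b r t : ℝ}
    (hab : a < b) (ht : t ∈ Icc a b) (hγ : ∀ u ∈ Icc a b, DifferentiableAt ℝ γ u)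
    (hγ' : DifferentiableAt ℝ (deriv γ) t) (hnorm : ∀ u ∈ Icc a b, ‖γ u‖ = r) :
    ⟪deriv (deriv γ) t, γ t⟫ = -‖deriv γ t‖ ^ 2 := by
  have h := (hγ'.hasDerivAt.inner ℝ (hγ t ht).hasDerivAt).eq_zero_of_eqOn_const_Icc hab ht
    (c := 0) fun u hu ↦ inner_deriv_self_eq_zero_of_norm_eqOn_Icc hab hu (hγ u hu) hnorm
  rw [real_inner_self_eq_norm_sq] at h
  linarith

theorem neg_inner_le_neg_inner_add_norm_mul_norm_sub (v p w : E) :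
    -⟪v, w⟫ ≤ -⟪v, p⟫ + ‖v‖ * ‖w - p‖ := by
  have := real_inner_le_norm v (p - w)
  rw [inner_sub_right, norm_sub_rev] at this
  linarith

end

theorem stmt_4 {E : Type*} [NormedAddCommGroup E] [InnerProductSpace ℝ E]
    (T κ : ℝ) (hκ : 0 < κ) (hT : 0 < T) (hTκ : T ≤ 2 / κ) (γ : ℝ → E)
    (hγ : ContDiff ℝ 2 γ)
    (hsphere : ∀ t ∈ Set.Icc (0 : ℝ) T, ‖γ t‖ = 1)
    (hspeed : ∀ t ∈ Set.Icc (0 : ℝ) T, ‖deriv γ t‖ = 1)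
    (hcurv : ∀ t ∈ Set.Icc (0 : ℝ) T, ‖deriv (deriv γ) t‖ ≤ κ)
    (s z : E) (hs : ‖s - γ 0‖ ≤ 1 / κ) (hz : ‖z‖ ≤ 1 / (30 * κ)) :
    ∀ t ∈ Set.Icc (0 : ℝ) T, -⟪deriv (deriv γ) t, s + z⟫ ≤ 121 / 30 := by
  intro t ht
  have hγ1 : Differentiable ℝ γ := hγ.differentiable two_ne_zero
  have hγ2 : Differentiable ℝ (deriv γ) := (hγ.deriv' (n := 1)).differentiable one_ne_zero
  have hnormal : ⟪deriv (deriv γ) t, γ t⟫ = -1 := by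
    rw [inner_deriv_deriv_self_eq_neg_norm_sq_of_norm_eqOn_Icc hT ht (fun u _ ↦ hγ1 u) (hγ2 t)
      hsphere, hspeed t ht]
    norm_num
  have hchord : ‖γ t - γ 0‖ ≤ 2 / κ := by
    have := norm_image_sub_le_of_norm_deriv_le_segment' (f' := deriv γ) (C := 1)
      (fun u _ ↦ (hγ1 u).hasDerivAt.hasDerivWithinAt)
      (fun u hu ↦ (hspeed u (Ico_subset_Icc_self hu)).le) t ht
    linarith [ht.2]
  have hdist : ‖s + z - γ t‖ ≤ 91 / (30 * κ) := calc
    ‖s + z - γ t‖ = ‖(s - γ 0) + (γ 0 - γ t) + z‖ := by congr 1; abel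
    _ ≤ ‖s - γ 0‖ + ‖γ 0 - γ t‖ + ‖z‖ := norm_add₃_le
    _ ≤ 1 / κ + 2 / κ + 1 / (30 * κ) := by rw [norm_sub_rev (γ 0)]; gcongr
    _ = 91 / (30 * κ) := by field_simp; norm_num
  calc -⟪deriv (deriv γ) t, s + z⟫
      ≤ -⟪deriv (deriv γ) t, γ t⟫ + ‖deriv (deriv γ) t‖ * ‖s + z - γ t‖ :=
        neg_inner_le_neg_inner_add_norm_mul_norm_sub _ _ _
    _ ≤ 1 + κ * (91 / (30 * κ)) := by rw [hnormal, neg_neg]; gcongr; exact hcurv t ht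
    _ = 121 / 30 := by field_simp; norm_num
end

section
/- Let L, a, θ be real numbers with L ≥ 0, 0 ≤ a ≤ 1, and 0 ≤ θ ≤ 1/√3. If cosh L = 1 + (sinh a)² · (1 − cos θ), then L ≤ √6 · a · θ. -/
theorem stmt_6 (L a θ : ℝ) (hL : 0 ≤ L) (ha0 : 0 ≤ a) (ha1 : a ≤ 1)
    (hθ0 : 0 ≤ θ) (hθ1 : θ ≤ 1 / Real.sqrt 3)
    (h : Real.cosh L = 1 + (Real.sinh a) ^ 2 * (1 - Real.cos θ)) :
    L ≤ Real.sqrt 6 * a * θ := by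
  -- lower bound: cosh L ≥ 1 + L^2/4
  have hcosh : 1 + L ^ 2 / 4 ≤ Real.cosh L := by
    rw [Real.cosh_eq]
    have h1 : 1 + L + L ^ 2 / 2 ≤ Real.exp L := Real.quadratic_le_exp_of_nonneg hL
    have h2 : 1 + (-L) ≤ Real.exp (-L) := Real.add_one_le_exp (-L) |>.trans_eq' (by ring)
    nlinarith
  -- upper bound on sinh a : sinh a ≤ (6/5) a
  have hsinh : Real.sinh a ≤ 6 / 5 * a := by
    rw [Real.sinh_eq]
    have hT : Real.exp a ≤ 1 + a + a ^ 2 / 2 + 2 * a ^ 3 / 9 := by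
      have := Real.exp_bound' ha0 ha1 (n := 3) (by norm_num)
      have e : (∑ i ∈ Finset.range 3, a ^ i / (Nat.factorial i : ℝ))
          + a ^ 3 * ((3 : ℕ) + 1) / ((Nat.factorial 3 : ℝ) * 3)
          = 1 + a + a ^ 2 / 2 + 2 * a ^ 3 / 9 := by
        simp [Finset.sum_range_succ, Nat.factorial]
        ring
      linarith [e ▸ this]
    have ht : 1 + a ≤ Real.exp a := by linarith [Real.add_one_le_exp a]
    have htpos : (0 : ℝ) < Real.exp a := Real.exp_pos a
    have hinv : Real.exp (-a) = 1 / Real.exp a := by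
      rw [Real.exp_neg]; ring
    rw [hinv, div_le_iff₀ (by positivity : (0:ℝ) < 2)]
    have h1t : Real.exp a - 1 / Real.exp a = (Real.exp a ^ 2 - 1) / Real.exp a := by
      field_simp
    rw [h1t, div_le_iff₀ htpos]
    have hUt : 0 ≤ (1 + a + a ^ 2 / 2 + 2 * a ^ 3 / 9) - Real.exp a := by linarith
    have hs : 0 ≤ Real.exp a + (1 + a + a ^ 2 / 2 + 2 * a ^ 3 / 9) - 12 / 5 * a := by
      nlinarith
    nlinarith [mul_nonneg hUt hs, mul_nonneg ha0 ha0, mul_nonneg (mul_nonneg ha0 ha0) ha0,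
      mul_nonneg (mul_nonneg (mul_nonneg ha0 ha0) ha0) ha0, sq_nonneg (1 - a),
      mul_nonneg (mul_nonneg ha0 ha0) (sq_nonneg (1 - a)),
      mul_nonneg (mul_nonneg (mul_nonneg ha0 ha0) (mul_nonneg ha0 ha0)) (sq_nonneg (1 - a))]
  have hsinh0 : 0 ≤ Real.sinh a := by
    rw [← Real.sinh_zero]; exact Real.sinh_le_sinh.2 ha0
  have hcos : 1 - Real.cos θ ≤ θ ^ 2 / 2 := by
    have := Real.one_sub_sq_div_two_le_cos (x := θ)
    linarith
  have hcos0 : 0 ≤ 1 - Real.cos θ := by linarith [Real.cos_le_one θ]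
  -- combine
  have hsq : L ^ 2 ≤ 6 * a ^ 2 * θ ^ 2 := by
    have h1 : (Real.sinh a) ^ 2 ≤ (6 / 5 * a) ^ 2 := by
      apply pow_le_pow_left₀ hsinh0 hsinh
    have h2 : (Real.sinh a) ^ 2 * (1 - Real.cos θ) ≤ (6 / 5 * a) ^ 2 * (θ ^ 2 / 2) := by
      apply mul_le_mul h1 hcos hcos0 (by positivity)
    nlinarith
  have h6 : (Real.sqrt 6 * a * θ) ^ 2 = 6 * a ^ 2 * θ ^ 2 := by
    have : Real.sqrt 6 ^ 2 = 6 := Real.sq_sqrt (by norm_num)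
    nlinarith [this]
  have hrhs : 0 ≤ Real.sqrt 6 * a * θ := by positivity
  nlinarith [hsq, h6, hrhs, sq_nonneg (L - Real.sqrt 6 * a * θ)]
end

section
/- Let τ > 0, c > 0, b ≥ 0, and let X : ℝ → ℝ be differentiable on [0, τ] with X(0) ≥ 0. Suppose that for every t ∈ [0, τ], if X(t) ≥ b then X'(t) ≤ −c · X(t). Then X(τ) ≤ max { exp(−cτ) · X(0), b }. -/
/-!
Take the last time `s ≤ τ` at which `X ≤ b` (or `s = 0` if there is none). On `(s, τ]` the decay
hypothesis holds, so `e^{ct} X t` is antitone there and `X τ ≤ e^{-c(τ-s)} X s`. Without such a time this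
is the first bound; otherwise `X s ≤ b` and the factor `e^{-c(τ-s)} ≤ 1` gives `X τ ≤ b`.
-/

open Set Real

theorem le_exp_neg_mul_of_deriv_le_neg_mul {X X' : ℝ → ℝ} {c s τ : ℝ} (hsτ : s ≤ τ)
    (hcont : ContinuousOn X (Icc s τ)) (hderiv : ∀ t ∈ Ioo s τ, HasDerivAt X (X' t) t)
    (hdecay : ∀ t ∈ Ioo s τ, X' t ≤ -c * X t) :
    X τ ≤ exp (-c * (τ - s)) * X s := by
  have hanti : AntitoneOn (fun t ↦ exp (c * t) * X t) (Icc s τ) := by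
    refine antitoneOn_of_hasDerivWithinAt_nonpos (convex_Icc s τ)
      ((continuous_exp.comp (continuous_const_mul c)).continuousOn.mul hcont)
      (f' := fun t ↦ exp (c * t) * (X' t + c * X t)) (fun t ht ↦ ?_) (fun t ht ↦ ?_)
    all_goals rw [interior_Icc] at ht
    · have hexp : HasDerivAt (fun t ↦ exp (c * t)) (exp (c * t) * c) t := by
        simpa using ((hasDerivAt_id t).const_mul c).exp
      exact (hexp.mul (hderiv t ht)).hasDerivWithinAt.congr_deriv (by ring)
    · exact mul_nonpos_of_nonneg_of_nonpos (exp_pos _).le (by linarith [hdecay t ht])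
  have hmono := hanti (left_mem_Icc.2 hsτ) (right_mem_Icc.2 hsτ) hsτ
  calc X τ = exp (-c * τ) * (exp (c * τ) * X τ) := by
        rw [← mul_assoc, ← exp_add]; simp
    _ ≤ exp (-c * τ) * (exp (c * s) * X s) := by gcongr
    _ = exp (-c * (τ - s)) * X s := by
        rw [← mul_assoc, ← exp_add]; ring_nf

theorem exists_forall_Ioc_lt_of_le_of_continuousOn {X : ℝ → ℝ} {a τ b t₀ : ℝ}
    (hcont : ContinuousOn X (Icc a τ)) (ht₀ : t₀ ∈ Icc a τ) (hXt₀ : X t₀ ≤ b) :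
    ∃ s ∈ Icc a τ, X s ≤ b ∧ ∀ t ∈ Ioc s τ, b < X t := by
  have hcompact : IsCompact (Icc a τ ∩ X ⁻¹' Iic b) :=
    isCompact_Icc.of_isClosed_subset (hcont.preimage_isClosed_of_isClosed isClosed_Icc isClosed_Iic)
      inter_subset_left
  obtain ⟨s, ⟨hs, hXs⟩, hgreatest⟩ := hcompact.exists_isGreatest ⟨t₀, ht₀, hXt₀⟩
  refine ⟨s, hs, hXs, fun t ht ↦ lt_of_not_ge fun hXt ↦ ?_⟩
  exact (hgreatest ⟨⟨hs.1.trans ht.1.le, ht.2⟩, hXt⟩).not_gt ht.1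

theorem stmt_8_general (τ c b : ℝ) (hτ : 0 < τ) (hc : 0 < c) (hb : 0 ≤ b)
    (X X' : ℝ → ℝ)
    (hderiv : ∀ t ∈ Set.Icc (0 : ℝ) τ, HasDerivAt X (X' t) t)
    (hdecay : ∀ t ∈ Set.Icc (0 : ℝ) τ, b ≤ X t → X' t ≤ -c * X t) :
    X τ ≤ max (Real.exp (-c * τ) * X 0) b := by
  have hcont : ContinuousOn X (Icc 0 τ) := fun t ht ↦ (hderiv t ht).continuousAt.continuousWithinAt
  by_cases hdip : ∃ t₀ ∈ Icc 0 τ, X t₀ ≤ b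
  · obtain ⟨t₀, ht₀, hXt₀⟩ := hdip
    obtain ⟨s, hs, hXs, habove⟩ := exists_forall_Ioc_lt_of_le_of_continuousOn hcont ht₀ hXt₀
    have hsub : Icc s τ ⊆ Icc 0 τ := Icc_subset_Icc_left hs.1
    have hbound := le_exp_neg_mul_of_deriv_le_neg_mul hs.2 (hcont.mono hsub)
      (fun t ht ↦ hderiv t (hsub (Ioo_subset_Icc_self ht)))
      (fun t ht ↦ hdecay t (hsub (Ioo_subset_Icc_self ht)) (habove t (Ioo_subset_Ioc_self ht)).le)
    have hfactor : exp (-c * (τ - s)) ≤ 1 := exp_le_one_iff.2 (by nlinarith [hs.2])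
    refine le_max_of_le_right (hbound.trans ?_)
    calc exp (-c * (τ - s)) * X s ≤ exp (-c * (τ - s)) * b := by gcongr
      _ ≤ b := mul_le_of_le_one_left hb hfactor
  · push Not at hdip
    have hbound := le_exp_neg_mul_of_deriv_le_neg_mul hτ.le hcont
      (fun t ht ↦ hderiv t (Ioo_subset_Icc_self ht))
      (fun t ht ↦ hdecay t (Ioo_subset_Icc_self ht) (hdip t (Ioo_subset_Icc_self ht)).le)
    rw [sub_zero] at hbound
    exact le_max_of_le_left hbound

theorem stmt_8 (τ c b : ℝ) (hτ : 0 < τ) (hc : 0 < c) (hb : 0 ≤ b)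
    (X X' : ℝ → ℝ)
    (hderiv : ∀ t ∈ Set.Icc (0 : ℝ) τ, HasDerivAt X (X' t) t)
    (hX0 : 0 ≤ X 0)
    (hdecay : ∀ t ∈ Set.Icc (0 : ℝ) τ, b ≤ X t → X' t ≤ -c * X t) :
    X τ ≤ max (Real.exp (-c * τ) * X 0) b :=
  stmt_8_general τ c b hτ hc hb X X' hderiv hdecay
end
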